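/- Consider the point vector field X = y*∂_x on the plane and its prolongations to the jet space, with prolongation coefficients φ_1 = -y1^2, φ_2 = -3*y1*y2, φ_3 = -(4*y1*y3 + 3*y2^2), φ_4 = -(5*y1*y4 + 10*y2*y3), φ_5 = -(6*y1*y5 + 15*y2*y4 + 10*y3^2). Define R5' = 9*y2^2*y5 - 45*y2*y3*y4 + 40*y3^3 (the relative invariant R5 of order 5 for the plane action). Then the prolonged vector field X^{(5)} = y∂_x + Σ_{i=1}^{5} φ_i ∂_{y_i} satisfies X^{(5)}(R5') = -12*y1*R5'. -/

import Mathlib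

namespace Stmt17

/-- Points of the jet space with coordinates `(x, y, y1, y2, y3, y4, y5)`. -/
abbrev Pt := Fin 7 → ℝ

/-- The fifth prolongation `X⁽⁵⁾` of the point vector field `y ∂_x`, with
prolongation coefficients `φ₁ = −y₁²`, `φ₂ = −3y₁y₂`, `φ₃ = −(4y₁y₃ + 3y₂²)`,
`φ₄ = −(5y₁y₄ + 10y₂y₃)`, `φ₅ = −(6y₁y₅ + 15y₂y₄ + 10y₃²)`.
Coordinates: `p 0 = x, p 1 = y, p (k+1) = y_k`. -/
def X : Pt → Pt := fun p =>
  ![p 1, 0,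
    -(p 2) ^ 2,
    -3 * p 2 * p 3,
    -(4 * p 2 * p 4 + 3 * (p 3) ^ 2),
    -(5 * p 2 * p 5 + 10 * p 3 * p 4),
    -(6 * p 2 * p 6 + 15 * p 3 * p 5 + 10 * (p 4) ^ 2)]

/-- The order-5 relative invariant `R₅' = 9 y₂² y₅ − 45 y₂ y₃ y₄ + 40 y₃³`. -/
def R5' : Pt → ℝ := fun p =>
  9 * (p 3) ^ 2 * p 6 - 45 * p 3 * p 4 * p 5 + 40 * (p 4) ^ 3

theorem fderiv_R5'_apply (p v : Pt) :
    fderiv ℝ R5' p v = (18 * p 3 * p 6 - 45 * p 4 * p 5) * v 3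
      + (120 * p 4 ^ 2 - 45 * p 3 * p 5) * v 4 - 45 * p 3 * p 4 * v 5 + 9 * p 3 ^ 2 * v 6 := by
  have hcoord (i : Fin 7) :
      HasFDerivAt (fun q : Pt => q i) (ContinuousLinearMap.proj (R := ℝ) i) p :=
    hasFDerivAt_apply i p
  have hR : HasFDerivAt R5' _ p :=
    ((((hcoord 3).pow 2).const_mul 9).mul (hcoord 6)).sub
      ((((hcoord 3).const_mul 45).mul (hcoord 4)).mul (hcoord 5))
      |>.add (((hcoord 4).pow 3).const_mul 40)
  rw [hR.fderiv]
  simp only [Nat.add_one_sub_one, pow_one, nsmul_eq_mul, Nat.cast_ofNat, Pi.mul_apply,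
    add_apply, sub_apply, smul_apply, ContinuousLinearMap.proj_apply, smul_eq_mul]
  ring

/-- `X⁽⁵⁾(R₅') = −12 y₁ R₅'`. -/
theorem relative_invariant_R5' (p : Pt) :
    fderiv ℝ R5' p (X p) = -12 * p 2 * R5' p := by
  rw [fderiv_R5'_apply]
  simp only [X, R5', Matrix.cons_val]
  ring

end Stmt17
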